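/- Let V be a rooted directed tree with root v0 and μ=(μ_v)_{v∈V} a weight of nonzero scalars. Let 𝒥 be the set of all backward invariant sequences f on V with f(v0)=1. Then: (a) inf_{f∈𝒥} ∑_{v∈V}|f(v)μ_v| = r_1(V,μ) and inf_{f∈𝒥} ∑_{v∈V,v≠v0}|f(v)μ_v| = c_1(V,μ). (b) If r_1(V,μ)<∞ (equivalently c_1(V,μ)<∞), then there is a branch (v0,v1,v2,…) starting from v0 with ∑_{n≥0}|μ_{v_n}|<∞, and for any such branch the indicator sequence f=∑_{n≥0} e_{v_n} (f(v_n)=1 for all n, f=0 elsewhere) is a backward invariant sequence in ℓ^1(V,μ) with f(v0)=1. -/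

import Mathlib

/-!
The indicator of a branch is backward invariant and its weighted `ℓ¹`-norm is the weight of the
branch, which gives the inequalities `≤`. Conversely, let `g` be backward invariant with
`g v₀ = 1`. Then `h = |g|` satisfies `h v ≤ ∑_{u ∈ Chi(v)} h u`, so if `Φ v` denotes the
`ℓ¹(μ)`-norm of `g` on the subtree below `v`, the ratio `C v = Φ v / h v` dominates `|μ_v|`, and
for every `δ > 0` some child `u` has `|μ_v| + C u ≤ C v + δ`. Descending greedily with slacks
`δ_k` of total sum `< ε` yields a branch of weight at most `C v₀ + ε = ‖g‖ + ε`.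
-/

open scoped ENNReal NNReal Topology Classical
open Filter

namespace PaperTree

/-! ### Directed trees -/

variable {V : Type*}

/-- Iterated parent map of a directed tree given by a parent function. -/
def parIter (par : V → Option V) : ℕ → V → Option V
  | 0, v => some v
  | n + 1, v => (par v).bind (parIter par n)

/-- `par` is the parent function of a (countable, connected, acyclic) directed tree on `V`,
in which every vertex has at most one parent and at most one vertex (the root) has none. -/
structure IsDirectedTree (par : V → Option V) : Prop where
  countable : Countable V
  acyclic : ∀ (v : V) (n : ℕ), 0 < n → parIter par n v ≠ some v
  connected : ∀ u v : V, ∃ (m n : ℕ) (w : V), parIter par m u = some w ∧ parIter par n v = some w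
  root_unique : ∀ u v : V, par u = none → par v = none → u = v

/-- The set of children of `v`. -/
def children (par : V → Option V) (v : V) : Set V := {u : V | par u = some v}

/-- The set of descendants of `v` (including `v`); the rooted subtree `V(v)`. -/
def descendants (par : V → Option V) (v : V) : Set V := {u : V | ∃ n : ℕ, parIter par n u = some v}

def IsLeafV (par : V → Option V) (v : V) : Prop := children par v = ∅

def Leafless (par : V → Option V) : Prop := ∀ v : V, children par v ≠ ∅

def IsRoot (par : V → Option V) (v : V) : Prop := par v = none

def Rooted (par : V → Option V) : Prop := ∃ v : V, IsRoot par v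

def Unrooted (par : V → Option V) : Prop := ∀ v : V, par v ≠ none

/-- The tree has a free left end: some vertex all of whose (proper) ancestors
have exactly one child. -/
def HasFreeLeftEnd (par : V → Option V) : Prop :=
  ∃ v : V, ∀ n : ℕ, 1 ≤ n → ∀ w : V, parIter par n v = some w → ∃! u : V, u ∈ children par w

/-- The tree has finite length (all branches have uniformly bounded length). -/
def FiniteLength (par : V → Option V) : Prop := ∃ m : ℕ, ∀ u : V, parIter par (m + 1) u = none

/-- Product of the weights along the upward path of length `n` ending at `u`;
for `u ∈ Chi^n(v)` this is `λ(v → u)`, and `pathProd par lam n v = λ(par^n(v) → v)`. -/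
def pathProd {𝕜 : Type*} [Monoid 𝕜] (par : V → Option V) (lam : V → 𝕜) : ℕ → V → 𝕜
  | 0, _ => 1
  | n + 1, u => lam u * ((par u).elim 1 (pathProd par lam n))

/-- A (finite or infinite, maximal) branch starting at `v`, encoded with `Option`. -/
def IsOptBranch (par : V → Option V) (v : V) (b : ℕ → Option V) : Prop :=
  b 0 = some v ∧
  (∀ (k : ℕ) (w : V), b k = some w →
      (children par w = ∅ ∧ b (k + 1) = none) ∨ ∃ u ∈ children par w, b (k + 1) = some u) ∧
  ∀ k : ℕ, b k = none → b (k + 1) = none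

/-- An infinite branch starting at `v` (adequate for leafless trees). -/
def IsBranch (par : V → Option V) (v : V) (b : ℕ → V) : Prop :=
  b 0 = v ∧ ∀ k : ℕ, b (k + 1) ∈ children par (b k)

/-- The `[0,∞]`-valued absolute weight associated with a scalar weight. -/
noncomputable def nw {𝕜 : Type*} [RCLike 𝕜] (μ : V → 𝕜) : V → ℝ≥0∞ := fun v => (‖μ v‖₊ : ℝ≥0∞)

/-! ### Fixed points over subtrees and backward invariant sequences -/

section Invariance

variable {𝕜 : Type*} [RCLike 𝕜] {V : Type*}

/-- The restriction of `g` to the subtree `W` is a fixed point of the weighted backward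
shift over `W`: `g w = ∑_{u ∈ Chi(w) ∩ W} λ_u g u` (unconditionally) for every `w ∈ W`. -/
def FixedPtOver (par : V → Option V) (lam : V → 𝕜) (g : V → 𝕜) (W : Set V) : Prop :=
  ∀ w ∈ W, HasSum (fun u : ↥(children par w ∩ W) => lam u.1 * g u.1) (g w)

/-- `g` is backward invariant with respect to the children map `chi`:
`g v = ∑_{u ∈ chi v} g u` (unconditionally) for every non-leaf `v`. -/
def BackwardInv (chi : V → Set V) (g : V → 𝕜) : Prop :=
  ∀ v : V, chi v ≠ ∅ → HasSum (fun u : ↥(chi v) => g u.1) (g v)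

/-- Backward invariance over a subtree `W` (with respect to the children map `chi`). -/
def BackwardInvOn (chi : V → Set V) (W : Set V) (g : V → 𝕜) : Prop :=
  ∀ w ∈ W, (chi w ∩ W).Nonempty → HasSum (fun u : ↥(chi w ∩ W) => g u.1) (g w)

/-- A scalar that is a (strictly) positive real. -/
def IsPosScalar {𝕜 : Type*} [RCLike 𝕜] (c : 𝕜) : Prop := ∃ r : ℝ, 0 < r ∧ c = (r : 𝕜)

end Invariance

/-! ### The constants `c_1` and `r_1` -/

section COne

variable {V : Type*}

/-- `∑_{n ≥ 1} w(v_n)` along an (optional) branch `(v_0, v_1, v_2, …)`. -/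
noncomputable def branchTail (w : V → ℝ≥0∞) (b : ℕ → Option V) : ℝ≥0∞ :=
  ∑' n : ℕ, (b (n + 1)).elim 0 w

/-- `c_1(V(v), w)`: the infimum over all branches starting at `v` of `∑_{n ≥ 1} w(v_n)`. -/
noncomputable def c1C (par : V → Option V) (w : V → ℝ≥0∞) (v : V) : ℝ≥0∞ :=
  ⨅ b ∈ {b : ℕ → Option V | IsOptBranch par v b}, branchTail w b

/-- `r_1(V(v), w)`. -/
noncomputable def r1C (par : V → Option V) (w : V → ℝ≥0∞) (v : V) : ℝ≥0∞ :=
  w v + c1C par w v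

end COne

/-! ### Weighted `ℓ^p`- and sup-norms on subsets of vertices -/

section Norms

variable {𝕜 : Type*} [RCLike 𝕜] {V : Type*}

/-- `(∑_{v ∈ S} (|g v| w v)^p)^{1/p}` in `[0,∞]`. -/
noncomputable def lpSumOn (w : V → ℝ≥0∞) (p : ℝ) (S : Set V) (g : V → 𝕜) : ℝ≥0∞ :=
  (∑' v : ↥S, ((‖g v.1‖₊ : ℝ≥0∞) * w v.1) ^ p) ^ (1 / p)

/-- `sup_{v ∈ S} |g v| w v` in `[0,∞]`. -/
noncomputable def supNormOn (w : V → ℝ≥0∞) (S : Set V) (g : V → 𝕜) : ℝ≥0∞ :=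
  ⨆ v : ↥S, (‖g v.1‖₊ : ℝ≥0∞) * w v.1

end Norms

variable {par : V → Option V}

section ParentIteration

theorem parIter_add (m n : ℕ) (x : V) :
    parIter par (m + n) x = (parIter par m x).bind (parIter par n) := by
  induction m generalizing x with
  | zero => rw [Nat.zero_add]; rfl
  | succ m ih =>
    rw [Nat.add_right_comm]
    show (par x).bind (parIter par (m + n)) = ((par x).bind (parIter par m)).bind _
    cases par x
    · rfl
    · exact ih _

theorem parIter_succ_of_mem_children {n : ℕ} {x u v : V} (hu : u ∈ children par v)
    (hx : parIter par n x = some u) : parIter par (n + 1) x = some v := by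
  rw [parIter_add, hx]
  show (par u).bind (parIter par 0) = some v
  rw [show par u = some v from hu]
  rfl

theorem IsDirectedTree.eq_of_parIter_eq (hT : IsDirectedTree par) {x a : V} {m n : ℕ}
    (hm : parIter par m x = some a) (hn : parIter par n x = some a) : m = n := by
  wlog hmn : m ≤ n generalizing m n
  · exact (this hn hm (le_of_not_ge hmn)).symm
  obtain ⟨k, rfl⟩ := Nat.exists_eq_add_of_le hmn
  rw [parIter_add, hm] at hn
  by_contra hk
  exact hT.acyclic a k (by omega) hn

theorem IsDirectedTree.descendants_subset_of_mem_children (hT : IsDirectedTree par) {u v : V}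
    (hu : u ∈ children par v) : descendants par u ⊆ descendants par v \ {v} := by
  rintro x ⟨n, hn⟩
  have hxv := parIter_succ_of_mem_children hu hn
  refine ⟨⟨n + 1, hxv⟩, fun hx => ?_⟩
  rw [Set.mem_singleton_iff.mp hx] at hxv
  exact Nat.succ_ne_zero n (hT.eq_of_parIter_eq hxv rfl)

theorem IsDirectedTree.pairwiseDisjoint_descendants (hT : IsDirectedTree par) (v : V) :
    (children par v).PairwiseDisjoint (descendants par) := by
  intro u hu u' hu' hne
  refine Set.disjoint_left.mpr fun x ⟨m, hm⟩ ⟨n, hn⟩ => hne ?_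
  obtain rfl : m = n := Nat.succ_injective <|
    hT.eq_of_parIter_eq (parIter_succ_of_mem_children hu hm) (parIter_succ_of_mem_children hu' hn)
  exact Option.some_injective _ (hm.symm.trans hn)

theorem IsDirectedTree.descendants_eq_univ (hT : IsDirectedTree par) {v₀ : V}
    (hroot : IsRoot par v₀) : descendants par v₀ = Set.univ := by
  refine Set.eq_univ_of_forall fun u => ?_
  obtain ⟨m, n, a, hm, hn⟩ := hT.connected u v₀
  cases n with
  | zero => exact ⟨m, hm.trans hn.symm⟩
  | succ n =>
    rw [parIter, show par v₀ = none from hroot] at hn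
    cases hn

end ParentIteration

section SubtreeSum

noncomputable def subtreeSum (par : V → Option V) (F : V → ℝ≥0∞) (v : V) : ℝ≥0∞ :=
  ∑' x : descendants par v, F x

theorem subtreeSum_of_isRoot (hT : IsDirectedTree par) {v₀ : V} (hroot : IsRoot par v₀)
    (F : V → ℝ≥0∞) : subtreeSum par F v₀ = ∑' v, F v := by
  rw [subtreeSum, hT.descendants_eq_univ hroot, tsum_univ]

theorem le_subtreeSum (F : V → ℝ≥0∞) (v : V) : F v ≤ subtreeSum par F v :=
  ENNReal.le_tsum (⟨v, 0, rfl⟩ : descendants par v)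

theorem IsDirectedTree.add_tsum_subtreeSum_le (hT : IsDirectedTree par) (F : V → ℝ≥0∞)
    (v : V) : F v + ∑' u : children par v, subtreeSum par F u ≤ subtreeSum par F v := by
  have hsub : ⋃ u ∈ children par v, descendants par u ⊆ descendants par v \ {v} :=
    Set.iUnion₂_subset fun u hu => hT.descendants_subset_of_mem_children hu
  have hdisj : Disjoint {v} (⋃ u ∈ children par v, descendants par u) :=
    Set.disjoint_singleton_left.mpr fun hv => (hsub hv).2 rfl
  calc F v + ∑' u : children par v, subtreeSum par F u
      = ∑' x : ↥({v} ∪ ⋃ u ∈ children par v, descendants par u), F x := by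
        rw [ENNReal.summable.tsum_union_disjoint hdisj ENNReal.summable, tsum_singleton,
          ENNReal.tsum_biUnion' (hT.pairwiseDisjoint_descendants v)]
        rfl
    _ ≤ subtreeSum par F v := ENNReal.tsum_mono_subtype F <|
        Set.union_subset (Set.singleton_subset_iff.mpr ⟨0, rfl⟩) (hsub.trans Set.sdiff_subset)

end SubtreeSum

namespace IsOptBranch

variable {v₀ : V} {b : ℕ → Option V}

theorem exists_parent (hb : IsOptBranch par v₀ b) {k : ℕ} {x : V} (hx : b (k + 1) = some x) :
    ∃ y, b k = some y ∧ x ∈ children par y := by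
  cases hk : b k with
  | none => rw [hb.2.2 k hk] at hx; cases hx
  | some y =>
    rcases hb.2.1 k y hk with ⟨-, hnone⟩ | ⟨u, hu, hsucc⟩
    · rw [hnone] at hx; cases hx
    · obtain rfl : x = u := Option.some_injective _ (hx.symm.trans hsucc)
      exact ⟨y, rfl, hu⟩

theorem parIter_eq (hb : IsOptBranch par v₀ b) : ∀ {k : ℕ} {x : V}, b k = some x →
    parIter par k x = some v₀
  | 0, x, hx => by rw [hb.1] at hx; exact hx.symm
  | k + 1, x, hx => by
    obtain ⟨y, hy, hxy⟩ := hb.exists_parent hx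
    show (par x).bind (parIter par k) = some v₀
    rw [show par x = some y from hxy]
    exact hb.parIter_eq hy

theorem index_unique (hT : IsDirectedTree par) (hb : IsOptBranch par v₀ b) {m n : ℕ} {x : V}
    (hm : b m = some x) (hn : b n = some x) : m = n :=
  hT.eq_of_parIter_eq (hb.parIter_eq hm) (hb.parIter_eq hn)

theorem exists_index_of_mem_children (hroot : IsRoot par v₀) (hb : IsOptBranch par v₀ b)
    {u v : V} (hu : u ∈ children par v) {n : ℕ} (hn : b n = some u) :
    ∃ k, n = k + 1 ∧ b k = some v := by
  cases n with
  | zero =>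
    rw [hb.1, Option.some_inj] at hn
    subst hn
    cases hroot.symm.trans hu
  | succ k =>
    obtain ⟨y, hy, hu'⟩ := hb.exists_parent hn
    obtain rfl : y = v := Option.some_injective _ (hu'.symm.trans hu)
    exact ⟨k, rfl, hy⟩

theorem tsum_elim_eq (hb : IsOptBranch par v₀ b) (w : V → ℝ≥0∞) :
    ∑' n, (b n).elim 0 w = w v₀ + branchTail w b := by
  rw [tsum_eq_zero_add' ENNReal.summable, hb.1]
  rfl

theorem r1C_le_tsum (hb : IsOptBranch par v₀ b) (w : V → ℝ≥0∞) :
    r1C par w v₀ ≤ ∑' n, (b n).elim 0 w := by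
  rw [hb.tsum_elim_eq, r1C]
  gcongr
  exact iInf₂_le b hb

end IsOptBranch

section GreedyBranch

theorem sum_range_add_le_of_forall_add_le {a E δ : ℕ → ℝ≥0∞}
    (h : ∀ k, a k + E (k + 1) ≤ E k + δ k) (k : ℕ) :
    ∑ n ∈ Finset.range k, a n + E k ≤ E 0 + ∑ n ∈ Finset.range k, δ n := by
  induction k with
  | zero => simp
  | succ k ih =>
    calc ∑ n ∈ Finset.range (k + 1), a n + E (k + 1)
        = ∑ n ∈ Finset.range k, a n + (a k + E (k + 1)) := by rw [Finset.sum_range_succ, add_assoc]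
      _ ≤ ∑ n ∈ Finset.range k, a n + E k + δ k := by rw [add_assoc]; exact add_le_add_right (h k) _
      _ ≤ E 0 + ∑ n ∈ Finset.range (k + 1), δ n := by
        rw [Finset.sum_range_succ, ← add_assoc]; gcongr

theorem exists_isOptBranch_elim_add_le (w C : V → ℝ≥0∞) (δ : ℕ → ℝ≥0∞) (P : Set V)
    (hle : ∀ v ∈ P, w v ≤ C v)
    (hstep : ∀ k : ℕ, ∀ v ∈ P, children par v ≠ ∅ →
      ∃ u ∈ children par v, u ∈ P ∧ w v + C u ≤ C v + δ k)
    {v₀ : V} (hv₀ : v₀ ∈ P) :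
    ∃ b, IsOptBranch par v₀ b ∧
      ∀ k, (b k).elim 0 w + (b (k + 1)).elim 0 C ≤ (b k).elim 0 C + δ k := by
  choose! next hnext using hstep
  let step (k : ℕ) (v : V) : Option V := if children par v = ∅ then none else some (next k v)
  obtain ⟨b, hb0, hbs⟩ : ∃ b : ℕ → Option V,
      b 0 = some v₀ ∧ ∀ k, b (k + 1) = (b k).bind (step k) :=
    ⟨fun n => Nat.rec (some v₀) (fun k x => x.bind (step k)) n, rfl, fun _ => rfl⟩
  have hP : ∀ k v, b k = some v → v ∈ P := by
    intro k
    induction k with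
    | zero => exact fun v hv => Option.some_injective _ (hb0.symm.trans hv) ▸ hv₀
    | succ k ih =>
      intro u hu
      rw [hbs] at hu
      cases hk : b k with
      | none => simp [hk] at hu
      | some v =>
        by_cases hleaf : children par v = ∅
        · simp [hk, step, hleaf] at hu
        · simp only [hk, Option.bind_some, step, hleaf, if_false, Option.some_inj] at hu
          exact hu ▸ (hnext k v (ih v hk) hleaf).2.1
  refine ⟨b, ⟨hb0, fun k v hk => ?_, fun k hk => by rw [hbs, hk]; rfl⟩, fun k => ?_⟩
  · rw [hbs, hk, Option.bind_some]
    by_cases hleaf : children par v = ∅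
    · exact .inl ⟨hleaf, by simp [step, hleaf]⟩
    · exact .inr ⟨_, (hnext k v (hP k v hk) hleaf).1, by simp [step, hleaf]⟩
  · rw [hbs]
    cases hk : b k with
    | none => simp
    | some v =>
      by_cases hleaf : children par v = ∅
      · simpa [step, hleaf] using le_add_right (hle v (hP k v hk))
      · simpa [step, hleaf] using (hnext k v (hP k v hk) hleaf).2.2

theorem exists_isOptBranch_tsum_le (w C : V → ℝ≥0∞) (P : Set V) (hle : ∀ v ∈ P, w v ≤ C v)
    (hstep : ∀ v ∈ P, children par v ≠ ∅ → ∀ δ : ℝ≥0∞, δ ≠ 0 →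
      ∃ u ∈ children par v, u ∈ P ∧ w v + C u ≤ C v + δ)
    {v₀ : V} (hv₀ : v₀ ∈ P) {ε : ℝ≥0∞} (hε : ε ≠ 0) :
    ∃ b, IsOptBranch par v₀ b ∧ ∑' n, (b n).elim 0 w ≤ C v₀ + ε := by
  obtain ⟨δ, hδ, hδε⟩ := ENNReal.exists_pos_sum_of_countable' hε ℕ
  obtain ⟨b, hb, hloc⟩ := exists_isOptBranch_elim_add_le w C δ P hle
    (fun k v hv hleaf => hstep v hv hleaf (δ k) (hδ k).ne') hv₀
  refine ⟨b, hb, ENNReal.tsum_eq_iSup_nat ▸ iSup_le fun k => ?_⟩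
  calc _ ≤ _ := le_self_add
    _ ≤ (b 0).elim 0 C + ∑ n ∈ Finset.range k, δ n :=
      sum_range_add_le_of_forall_add_le hloc k
    _ = C v₀ + ∑ n ∈ Finset.range k, δ n := by rw [hb.1]; rfl
    _ ≤ C v₀ + ε := by gcongr; exact (ENNReal.sum_le_tsum _).trans hδε.le

end GreedyBranch

section SubInvariant

variable {h w : V → ℝ≥0∞}

theorem IsDirectedTree.exists_child_subtreeSum_lt (hT : IsDirectedTree par) {v : V}
    (hsub : h v ≤ ∑' u : children par v, h u) {t : ℝ≥0∞}
    (hlt : subtreeSum par (fun x => h x * w x) v < h v * (w v + t)) :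
    ∃ u ∈ children par v, subtreeSum par (fun x => h x * w x) u < t * h u := by
  by_contra! hge
  refine hlt.not_ge ?_
  calc h v * (w v + t) = h v * w v + t * h v := by ring
    _ ≤ h v * w v + t * ∑' u : children par v, h u := by gcongr
    _ = h v * w v + ∑' u : children par v, t * h u := by rw [ENNReal.tsum_mul_left]
    _ ≤ h v * w v + ∑' u : children par v, subtreeSum par (fun x => h x * w x) u := by
        gcongr with u; exact hge u u.2
    _ ≤ subtreeSum par (fun x => h x * w x) v := hT.add_tsum_subtreeSum_le _ v

theorem le_subtreeSum_div {v : V} (hv : h v ≠ 0) (hfin : h v ≠ ⊤) :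
    w v ≤ subtreeSum par (fun x => h x * w x) v / h v := by
  rw [ENNReal.le_div_iff_mul_le (.inl hv) (.inl hfin), mul_comm]
  exact le_subtreeSum (fun x => h x * w x) v

theorem IsDirectedTree.exists_child_add_div_le (hT : IsDirectedTree par)
    (hsub : ∀ v, children par v ≠ ∅ → h v ≤ ∑' u : children par v, h u) (hfin : ∀ v, h v ≠ ⊤)
    {v : V} (hv : h v ≠ 0) (hvΦ : subtreeSum par (fun x => h x * w x) v ≠ ⊤)
    (hleaf : children par v ≠ ∅) {δ : ℝ≥0∞} (hδ : δ ≠ 0) :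
    ∃ u ∈ children par v, (h u ≠ 0 ∧ subtreeSum par (fun x => h x * w x) u ≠ ⊤) ∧
      w v + subtreeSum par (fun x => h x * w x) u / h u
        ≤ subtreeSum par (fun x => h x * w x) v / h v + δ := by
  set Φ := subtreeSum par (fun x => h x * w x)
  have hwv : w v + (Φ v / h v - w v + δ) = Φ v / h v + δ := by
    rw [← add_assoc, add_tsub_cancel_of_le (le_subtreeSum_div hv (hfin v))]
  have hlt : Φ v < h v * (w v + (Φ v / h v - w v + δ)) := by
    rw [hwv]
    calc Φ v = h v * (Φ v / h v) := (ENNReal.mul_div_cancel hv (hfin v)).symm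
      _ < h v * (Φ v / h v + δ) := by
        gcongr
        · exact hfin v
        · exact ENNReal.lt_add_right (ENNReal.div_lt_top hvΦ hv).ne hδ
  obtain ⟨u, hu, hΦu⟩ := hT.exists_child_subtreeSum_lt (hsub v hleaf) hlt
  have hu0 : h u ≠ 0 := fun h0 => by simp [h0] at hΦu
  refine ⟨u, hu, ⟨hu0, hΦu.ne_top⟩, hwv ▸ ?_⟩
  gcongr
  exact ENNReal.div_le_of_le_mul hΦu.le

theorem IsDirectedTree.r1C_le_subtreeSum (hT : IsDirectedTree par)
    (hsub : ∀ v, children par v ≠ ∅ → h v ≤ ∑' u : children par v, h u) (hfin : ∀ v, h v ≠ ⊤)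
    {v₀ : V} (h1 : h v₀ = 1) : r1C par w v₀ ≤ subtreeSum par (fun x => h x * w x) v₀ := by
  set Φ := subtreeSum par (fun x => h x * w x)
  by_cases hΦ : Φ v₀ = ⊤
  · simp [hΦ]
  refine ENNReal.le_of_forall_pos_le_add fun ε hε _ => ?_
  obtain ⟨b, hb, hsum⟩ := exists_isOptBranch_tsum_le w (fun v => Φ v / h v)
    {v | h v ≠ 0 ∧ Φ v ≠ ⊤} (fun v hv => le_subtreeSum_div hv.1 (hfin v))
    (fun v hv hleaf δ hδ => hT.exists_child_add_div_le hsub hfin hv.1 hv.2 hleaf hδ)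
    ⟨h1 ▸ one_ne_zero, hΦ⟩ (ENNReal.coe_ne_zero.mpr hε.ne')
  calc r1C par w v₀ ≤ _ := hb.r1C_le_tsum w
    _ ≤ Φ v₀ / h v₀ + ε := hsum
    _ = Φ v₀ + ε := by rw [h1, div_one]

end SubInvariant

section LOne

variable {𝕜 : Type*} [RCLike 𝕜]

theorem lpSumOn_one (w : V → ℝ≥0∞) (S : Set V) (g : V → 𝕜) :
    lpSumOn w 1 S g = ∑' v : S, ‖g v‖ₑ * w v := by
  simp [lpSumOn, enorm_eq_nnnorm]

theorem tsum_eq_add_tsum_ne (F : V → ℝ≥0∞) (a : V) :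
    ∑' v, F v = F a + ∑' v : {v : V | v ≠ a}, F v := by
  rw [← ENNReal.summable.tsum_add_tsum_compl (s := {a}) ENNReal.summable, tsum_singleton]
  rfl

theorem lpSumOn_univ_eq_add {w : V → ℝ≥0∞} {g : V → 𝕜} {a : V} (hg : g a = 1) :
    lpSumOn w 1 Set.univ g = w a + lpSumOn w 1 {v : V | v ≠ a} g := by
  rw [lpSumOn_one, lpSumOn_one, tsum_univ fun v => ‖g v‖ₑ * w v, tsum_eq_add_tsum_ne _ a, hg,
    enorm_one, one_mul]

theorem IsDirectedTree.c1C_le_lpSumOn (hT : IsDirectedTree par) {v₀ : V}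
    (hroot : IsRoot par v₀) {w : V → ℝ≥0∞} {g : V → 𝕜} (hg : BackwardInv (children par) g)
    (hg1 : g v₀ = 1) (hw : w v₀ ≠ ⊤) :
    c1C par w v₀ ≤ lpSumOn w 1 {v | v ≠ v₀} g := by
  have h := hT.r1C_le_subtreeSum (h := fun v => ‖g v‖ₑ) (w := w) (v₀ := v₀)
    (fun v hleaf => (hg v hleaf).tsum_eq ▸ enorm_tsum_le_tsum_enorm) (fun _ => enorm_ne_top)
    (by simp [hg1])
  rw [subtreeSum_of_isRoot hT hroot, tsum_eq_add_tsum_ne _ v₀, r1C, hg1, enorm_one, one_mul,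
    ← lpSumOn_one] at h
  exact (ENNReal.add_le_add_iff_left hw).mp h

end LOne

section BranchIndicator

variable {𝕜 : Type*} [RCLike 𝕜] {v₀ : V} {b : ℕ → Option V}

noncomputable def branchIndicator (𝕜 : Type*) [RCLike 𝕜] (b : ℕ → Option V) : V → 𝕜 :=
  fun v => if ∃ n : ℕ, b n = some v then 1 else 0

theorem branchIndicator_root (hb : IsOptBranch par v₀ b) : branchIndicator 𝕜 b v₀ = 1 :=
  if_pos ⟨0, hb.1⟩

theorem backwardInv_branchIndicator (hT : IsDirectedTree par) (hroot : IsRoot par v₀)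
    (hb : IsOptBranch par v₀ b) : BackwardInv (children par) (branchIndicator 𝕜 b) := by
  intro v hleaf
  by_cases hv : ∃ k, b k = some v
  · obtain ⟨k, hk⟩ := hv
    obtain ⟨u, hu, hsucc⟩ := (hb.2.1 k v hk).resolve_left fun h => hleaf h.1
    rw [show branchIndicator 𝕜 b v = 1 from if_pos ⟨k, hk⟩,
      ← show branchIndicator 𝕜 b u = 1 from if_pos ⟨k + 1, hsucc⟩]
    refine hasSum_single (⟨u, hu⟩ : children par v) fun ⟨u', hu'⟩ hne => if_neg ?_
    rintro ⟨n, hn⟩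
    obtain ⟨j, rfl, hj⟩ := hb.exists_index_of_mem_children hroot hu' hn
    obtain rfl := hb.index_unique hT hj hk
    exact hne (Subtype.ext (Option.some_injective _ (hn.symm.trans hsucc)))
  · rw [show branchIndicator 𝕜 b v = 0 from if_neg hv]
    convert hasSum_zero with ⟨u, hu⟩
    refine if_neg fun ⟨n, hn⟩ => hv ?_
    obtain ⟨k, -, hk⟩ := hb.exists_index_of_mem_children hroot hu hn
    exact ⟨k, hk⟩

theorem tsum_enorm_branchIndicator_mul (hT : IsDirectedTree par) (hb : IsOptBranch par v₀ b)
    (w : V → ℝ≥0∞) : ∑' v, ‖branchIndicator 𝕜 b v‖ₑ * w v = ∑' n, (b n).elim 0 w := by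
  set S := {v | ∃ n : ℕ, b n = some v}
  choose idx hidx using fun v : S => v.2
  have hinj : Function.Injective idx := fun v v' h => Subtype.ext <|
    Option.some_injective _ ((hidx v).symm.trans ((congrArg b h).trans (hidx v')))
  have hrange : Function.support (fun n => (b n).elim 0 w) ⊆ Set.range idx := by
    intro n hn
    cases hx : b n with
    | none => simp [hx] at hn
    | some x => exact ⟨⟨x, n, hx⟩, hb.index_unique hT (hidx _) hx⟩
  calc ∑' v, ‖branchIndicator 𝕜 b v‖ₑ * w v = ∑' v, S.indicator w v := by
        congr 1 with v
        simp only [branchIndicator, Set.indicator, S, Set.mem_ofPred_eq]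
        split_ifs <;> simp
    _ = ∑' v : S, (b (idx v)).elim 0 w := by rw [← tsum_subtype]; simp only [hidx]; rfl
    _ = ∑' n, (b n).elim 0 w := hinj.tsum_eq hrange

theorem lpSumOn_univ_branchIndicator (hT : IsDirectedTree par)
    (hb : IsOptBranch par v₀ b) (w : V → ℝ≥0∞) :
    lpSumOn w 1 Set.univ (branchIndicator 𝕜 b) = w v₀ + branchTail w b := by
  rw [lpSumOn_one, tsum_univ fun v => ‖branchIndicator 𝕜 b v‖ₑ * w v,
    tsum_enorm_branchIndicator_mul hT hb, hb.tsum_elim_eq]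

theorem lpSumOn_ne_branchIndicator (hT : IsDirectedTree par) (hb : IsOptBranch par v₀ b)
    {w : V → ℝ≥0∞} (hw : w v₀ ≠ ⊤) :
    lpSumOn w 1 {v | v ≠ v₀} (branchIndicator 𝕜 b) = branchTail w b := by
  have h := lpSumOn_univ_branchIndicator (𝕜 := 𝕜) hT hb w
  rw [lpSumOn_univ_eq_add (branchIndicator_root hb)] at h
  exact (ENNReal.add_right_inj hw).mp h

end BranchIndicator

theorem statement8_general
    {𝕜 : Type*} [RCLike 𝕜] {V : Type*} (par : V → Option V) (hTree : IsDirectedTree par)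
    (root : V) (hroot : IsRoot par root) (μ : V → 𝕜) :
    -- (a)
    ((⨅ g ∈ {g : V → 𝕜 | BackwardInv (children par) g ∧ g root = 1},
        lpSumOn (nw μ) 1 Set.univ g) = r1C par (nw μ) root ∧
      (⨅ g ∈ {g : V → 𝕜 | BackwardInv (children par) g ∧ g root = 1},
        lpSumOn (nw μ) 1 {v : V | v ≠ root} g) = c1C par (nw μ) root) ∧
    -- (b)
    (r1C par (nw μ) root < ⊤ →
      (∃ b : ℕ → Option V, IsOptBranch par root b ∧ nw μ root + branchTail (nw μ) b < ⊤) ∧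
      ∀ b : ℕ → Option V, IsOptBranch par root b → nw μ root + branchTail (nw μ) b < ⊤ →
        BackwardInv (children par) (fun v : V => if ∃ n : ℕ, b n = some v then (1 : 𝕜) else 0) ∧
        (fun v : V => if ∃ n : ℕ, b n = some v then (1 : 𝕜) else 0) root = 1 ∧
        lpSumOn (nw μ) 1 Set.univ
          (fun v : V => if ∃ n : ℕ, b n = some v then (1 : 𝕜) else 0) < ⊤) := by
  set J := {g : V → 𝕜 | BackwardInv (children par) g ∧ g root = 1}
  have hw : nw μ root ≠ ⊤ := ENNReal.coe_ne_top
  have hJ : ∀ b, IsOptBranch par root b → branchIndicator 𝕜 b ∈ J := fun b hb =>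
    ⟨backwardInv_branchIndicator hTree hroot hb, branchIndicator_root hb⟩
  have hc1 : (⨅ g ∈ J, lpSumOn (nw μ) 1 {v | v ≠ root} g) = c1C par (nw μ) root :=
    le_antisymm
      (le_iInf₂ fun b hb => iInf₂_le_of_le _ (hJ b hb) (lpSumOn_ne_branchIndicator hTree hb hw).le)
      (le_iInf₂ fun g hg => hTree.c1C_le_lpSumOn hroot hg.1 hg.2 hw)
  refine ⟨⟨?_, hc1⟩, fun hr1 => ⟨?_, fun b hb hfin => ⟨(hJ b hb).1, (hJ b hb).2, ?_⟩⟩⟩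
  · calc (⨅ g ∈ J, lpSumOn (nw μ) 1 Set.univ g)
        = ⨅ g ∈ J, nw μ root + lpSumOn (nw μ) 1 {v | v ≠ root} g :=
          iInf_congr fun g => iInf_congr fun hg => lpSumOn_univ_eq_add hg.2
      _ = r1C par (nw μ) root := by simp only [← ENNReal.add_iInf, hc1, r1C]
  · obtain ⟨b, hb⟩ := iInf_lt_iff.mp (ENNReal.add_lt_top.mp hr1).2
    obtain ⟨hb, hlt⟩ := iInf_lt_iff.mp hb
    exact ⟨b, hb, ENNReal.add_lt_top.mpr ⟨hw.lt_top, hlt⟩⟩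
  · exact (lpSumOn_univ_branchIndicator (𝕜 := 𝕜) hTree hb _).trans_lt hfin

/-- Theorem 6.8 / `t-char1inv`: the case `p = 1` on an arbitrary rooted
tree: the infima over backward invariant sequences equal `r_1` resp. `c_1`, and when these
are finite, indicator sequences of branches of summable weight are backward invariant
sequences in `ℓ^1(V,μ)` with value `1` at the root. -/
theorem statement8
    {𝕜 : Type*} [RCLike 𝕜] {V : Type*} (par : V → Option V) (hTree : IsDirectedTree par)
    (root : V) (hroot : IsRoot par root) (μ : V → 𝕜) (hμ : ∀ v : V, μ v ≠ 0) :
    -- (a)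
    ((⨅ g ∈ {g : V → 𝕜 | BackwardInv (children par) g ∧ g root = 1},
        lpSumOn (nw μ) 1 Set.univ g) = r1C par (nw μ) root ∧
      (⨅ g ∈ {g : V → 𝕜 | BackwardInv (children par) g ∧ g root = 1},
        lpSumOn (nw μ) 1 {v : V | v ≠ root} g) = c1C par (nw μ) root) ∧
    -- (b)
    (r1C par (nw μ) root < ⊤ →
      (∃ b : ℕ → Option V, IsOptBranch par root b ∧ nw μ root + branchTail (nw μ) b < ⊤) ∧
      ∀ b : ℕ → Option V, IsOptBranch par root b → nw μ root + branchTail (nw μ) b < ⊤ →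
        BackwardInv (children par) (fun v : V => if ∃ n : ℕ, b n = some v then (1 : 𝕜) else 0) ∧
        (fun v : V => if ∃ n : ℕ, b n = some v then (1 : 𝕜) else 0) root = 1 ∧
        lpSumOn (nw μ) 1 Set.univ
          (fun v : V => if ∃ n : ℕ, b n = some v then (1 : 𝕜) else 0) < ⊤) :=
  statement8_general par hTree root hroot μ

end PaperTree
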